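/- Under the hypotheses of the cell stress tensor formula — a finite family of triangular faces with vertex list r : ι → ℝ³, all face area vectors S_F nonzero, enclosed volume V ≠ 0, total area A, energy E(r) = k_V (V − V₀)² + k_A (A − A₀)², forces F_a = −∇_{r_a} E, and σ = (1/V) Σ_a r_a ⊗ F_a — the trace of σ satisfies tr(σ) = −6 k_V (V − V₀) − 4 k_A (A − A₀) A / V. -/

import Mathlib

open Matrix BigOperators

/-- Euclidean norm on `ℝ³` realized as `Fin 3 → ℝ`. -/
noncomputable def norm3 (v : Fin 3 → ℝ) : ℝ := Real.sqrt (v ⬝ᵥ v)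

/-- The area vector of a triangular face `T = (T₀, T₁, T₂)` with vertex list `r`. -/
noncomputable def faceAreaVec {ι : Type*} (r : ι → Fin 3 → ℝ) (T : ι × ι × ι) : Fin 3 → ℝ :=
  (1 / 2 : ℝ) • ((r T.2.1 - r T.1) ⨯₃ (r T.2.2 - r T.1))

/-- The total surface area `A = ∑_F ‖S_F‖` of a family of triangular faces. -/
noncomputable def polyArea {K ι : Type*} [Fintype K] (F : K → ι × ι × ι)
    (r : ι → Fin 3 → ℝ) : ℝ :=
  ∑ k : K, norm3 (faceAreaVec r (F k))

/-- The enclosed signed volume `V = (1/6) ∑_F r_{F₀} · (r_{F₁} ×₃ r_{F₂})`. -/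
noncomputable def polyVol {K ι : Type*} [Fintype K] (F : K → ι × ι × ι)
    (r : ι → Fin 3 → ℝ) : ℝ :=
  (1 / 6 : ℝ) * ∑ k : K, r (F k).1 ⬝ᵥ ((r (F k).2.1) ⨯₃ (r (F k).2.2))

/-- The gradient of a scalar function of a single point of `ℝ³`. -/
noncomputable def grad3 (f : (Fin 3 → ℝ) → ℝ) (x : Fin 3 → ℝ) : Fin 3 → ℝ :=
  fun i => fderiv ℝ f x (Pi.single i 1)

/-- The gradient of a scalar function of a family of points with respect to the vertex `a`. -/
noncomputable def vgrad {ι : Type*} [DecidableEq ι] (f : (ι → Fin 3 → ℝ) → ℝ)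
    (r : ι → Fin 3 → ℝ) (a : ι) : Fin 3 → ℝ :=
  grad3 (fun x => f (Function.update r a x)) (r a)

/-- The vertex-model energy `E(r) = k_V (V - V₀)² + k_A (A - A₀)²`. -/
noncomputable def cellEnergy {K ι : Type*} [Fintype K] (F : K → ι × ι × ι)
    (kV kA V₀ A₀ : ℝ) (r : ι → Fin 3 → ℝ) : ℝ :=
  kV * (polyVol F r - V₀) ^ 2 + kA * (polyArea F r - A₀) ^ 2

/-- The cell Cauchy stress tensor `σ = (1/V) ∑_a r_a ⊗ F_a` with forces `F_a = -∇_{r_a} E`. -/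
noncomputable def cellStress {K ι : Type*} [Fintype K] [Fintype ι] [DecidableEq ι]
    (F : K → ι × ι × ι) (kV kA V₀ A₀ : ℝ) (r : ι → Fin 3 → ℝ) :
    Matrix (Fin 3) (Fin 3) ℝ :=
  (polyVol F r)⁻¹ •
    ∑ a : ι, vecMulVec (r a) (-(vgrad (cellEnergy F kV kA V₀ A₀) r a))

/-- `polyVol` is differentiable. -/
lemma aux_vol_diff {K ι : Type*} [Fintype K] [Fintype ι] (F : K → ι × ι × ι) :
    Differentiable ℝ (polyVol F) := by
  unfold polyVol
  simp only [dotProduct, cross_apply, Fin.sum_univ_three, Matrix.cons_val_zero,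
    Matrix.cons_val_one, Matrix.head_cons, Matrix.cons_val_two, Matrix.tail_cons]
  fun_prop

/-- `polyArea` is differentiable at a vertex list with nonvanishing area vectors. -/
lemma aux_area_diff {K ι : Type*} [Fintype K] [Fintype ι] (F : K → ι × ι × ι)
    (r : ι → Fin 3 → ℝ) (hS : ∀ k : K, faceAreaVec r (F k) ≠ 0) :
    DifferentiableAt ℝ (polyArea F) r := by
  unfold polyArea norm3
  apply DifferentiableAt.fun_sum
  intro k _
  apply DifferentiableAt.sqrt
  · unfold faceAreaVec
    simp only [dotProduct, cross_apply, Fin.sum_univ_three, Pi.smul_apply, Pi.sub_apply,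
      smul_eq_mul, Matrix.cons_val_zero, Matrix.cons_val_one, Matrix.head_cons,
      Matrix.cons_val_two, Matrix.tail_cons]
    fun_prop
  · rw [Ne, dotProduct_self_eq_zero]
    exact hS k

/-- Scaling law of the volume: homogeneous of degree `3`. -/
lemma aux_vol_smul {K ι : Type*} [Fintype K] (F : K → ι × ι × ι)
    (r : ι → Fin 3 → ℝ) (t : ℝ) : polyVol F (t • r) = t ^ 3 * polyVol F r := by
  unfold polyVol
  have h : ∀ k : K, (t • r) (F k).1 ⬝ᵥ ((t • r) (F k).2.1 ⨯₃ (t • r) (F k).2.2)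
      = t ^ 3 * (r (F k).1 ⬝ᵥ (r (F k).2.1 ⨯₃ r (F k).2.2)) := by
    intro k
    simp only [Pi.smul_apply, dotProduct, cross_apply, Fin.sum_univ_three, smul_eq_mul,
      Matrix.cons_val_zero, Matrix.cons_val_one, Matrix.head_cons, Matrix.cons_val_two,
      Matrix.tail_cons]
    ring
  rw [Finset.sum_congr rfl (fun k _ => h k), ← Finset.mul_sum]
  ring

/-- Scaling law of a face area vector. -/
lemma aux_face_smul {ι : Type*} (r : ι → Fin 3 → ℝ) (T : ι × ι × ι) (t : ℝ) :
    faceAreaVec (t • r) T = (t ^ 2) • faceAreaVec r T := by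
  unfold faceAreaVec
  have h1 : (t • r) T.2.1 - (t • r) T.1 = t • (r T.2.1 - r T.1) := (smul_sub t _ _).symm
  have h2 : (t • r) T.2.2 - (t • r) T.1 = t • (r T.2.2 - r T.1) := (smul_sub t _ _).symm
  rw [h1, h2, LinearMap.map_smul₂, (crossProduct _).map_smul, smul_smul, smul_smul, smul_smul]
  congr 1
  ring

/-- Scaling law of the area: homogeneous of degree `2`. -/
lemma aux_area_smul {K ι : Type*} [Fintype K] (F : K → ι × ι × ι)
    (r : ι → Fin 3 → ℝ) (t : ℝ) : polyArea F (t • r) = t ^ 2 * polyArea F r := by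
  unfold polyArea
  rw [Finset.mul_sum]
  refine Finset.sum_congr rfl (fun k _ => ?_)
  rw [aux_face_smul]
  unfold norm3
  rw [show ((t ^ 2) • faceAreaVec r (F k)) ⬝ᵥ ((t ^ 2) • faceAreaVec r (F k))
      = (t ^ 2) ^ 2 * (faceAreaVec r (F k) ⬝ᵥ faceAreaVec r (F k)) by
    rw [smul_dotProduct, dotProduct_smul, smul_eq_mul, smul_eq_mul]; ring]
  rw [Real.sqrt_mul (by positivity), Real.sqrt_sq (by positivity)]

lemma aux_clm_dot (L : (Fin 3 → ℝ) →L[ℝ] ℝ) (v : Fin 3 → ℝ) :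
    v ⬝ᵥ (fun i => L (Pi.single i 1)) = L v := by
  have hv : v = ∑ i : Fin 3, v i • (Pi.single i 1 : Fin 3 → ℝ) := by
    funext j
    simp [Pi.single_apply, Finset.sum_apply]
  calc v ⬝ᵥ (fun i => L (Pi.single i 1))
      = ∑ i : Fin 3, L (v i • (Pi.single i 1 : Fin 3 → ℝ)) := by
        simp [dotProduct, L.map_smul, smul_eq_mul]
    _ = L (∑ i : Fin 3, v i • (Pi.single i 1 : Fin 3 → ℝ)) := (map_sum L _ _).symm
    _ = L v := by rw [← hv]

lemma aux_pi_single_clm {ι : Type*} [Fintype ι] [DecidableEq ι] (a : ι) (v : Fin 3 → ℝ) :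
    (ContinuousLinearMap.pi
      (Pi.single a (ContinuousLinearMap.id ℝ (Fin 3 → ℝ)) :
        ∀ _ : ι, (Fin 3 → ℝ) →L[ℝ] (Fin 3 → ℝ))) v = Pi.single a v := by
  funext b
  rw [ContinuousLinearMap.pi_apply]
  rcases eq_or_ne b a with h | h
  · subst h; simp
  · rw [Pi.single_eq_of_ne h, Pi.single_eq_of_ne h]
    rfl

/-- The trace of the cell Cauchy stress tensor satisfies
`tr(σ) = -6 k_V (V - V₀) - 4 k_A (A - A₀) A / V`. -/
theorem stmt13 {K ι : Type*} [Fintype K] [Fintype ι] [DecidableEq ι]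
    (F : K → ι × ι × ι) (r : ι → Fin 3 → ℝ)
    (hS : ∀ k : K, faceAreaVec r (F k) ≠ 0) (hV : polyVol F r ≠ 0)
    (kV kA V₀ A₀ : ℝ) :
    Matrix.trace (cellStress F kV kA V₀ A₀ r)
      = -(6 * kV * (polyVol F r - V₀))
        - 4 * kA * (polyArea F r - A₀) * polyArea F r / polyVol F r := by
  classical
  have hv : HasFDerivAt (polyVol F) (fderiv ℝ (polyVol F) r) r :=
    ((aux_vol_diff F) r).hasFDerivAt
  have ha : HasFDerivAt (polyArea F) (fderiv ℝ (polyArea F) r) r :=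
    (aux_area_diff F r hS).hasFDerivAt
  set Lv := fderiv ℝ (polyVol F) r with hLvdef
  set La := fderiv ℝ (polyArea F) r with hLadef
  have hsm : HasDerivAt (fun t : ℝ => t • r) r 1 := by
    simpa using (hasDerivAt_id (1 : ℝ)).smul_const r
  -- Euler identity for the volume
  have hLvr : Lv r = 3 * polyVol F r := by
    have h1 : HasDerivAt (fun t : ℝ => polyVol F (t • r)) (Lv r) 1 := by
      have hv' : HasFDerivAt (polyVol F) Lv ((1 : ℝ) • r) := by rw [one_smul]; exact hv
      exact hv'.comp_hasDerivAt 1 hsm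
    have h2 : HasDerivAt (fun t : ℝ => polyVol F (t • r)) (3 * polyVol F r) 1 := by
      simp only [aux_vol_smul]
      simpa using (hasDerivAt_pow 3 (1 : ℝ)).mul_const (polyVol F r)
    exact h1.unique h2
  -- Euler identity for the area
  have hLar : La r = 2 * polyArea F r := by
    have h1 : HasDerivAt (fun t : ℝ => polyArea F (t • r)) (La r) 1 := by
      have ha' : HasFDerivAt (polyArea F) La ((1 : ℝ) • r) := by rw [one_smul]; exact ha
      exact ha'.comp_hasDerivAt 1 hsm
    have h2 : HasDerivAt (fun t : ℝ => polyArea F (t • r)) (2 * polyArea F r) 1 := by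
      simp only [aux_area_smul]
      simpa using (hasDerivAt_pow 2 (1 : ℝ)).mul_const (polyArea F r)
    exact h1.unique h2
  -- derivative of the energy
  set DE := (kV * (2 * (polyVol F r - V₀))) • Lv + (kA * (2 * (polyArea F r - A₀))) • La
    with hDEdef
  have hE : HasFDerivAt (cellEnergy F kV kA V₀ A₀) DE r := by
    have hφ : HasDerivAt (fun t : ℝ => kV * (t - V₀) ^ 2)
        (kV * (2 * (polyVol F r - V₀))) (polyVol F r) := by
      simpa using (((hasDerivAt_id (polyVol F r)).sub_const V₀).pow 2).const_mul kV
    have hψ : HasDerivAt (fun t : ℝ => kA * (t - A₀) ^ 2)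
        (kA * (2 * (polyArea F r - A₀))) (polyArea F r) := by
      simpa using (((hasDerivAt_id (polyArea F r)).sub_const A₀).pow 2).const_mul kA
    have h1 := hφ.comp_hasFDerivAt r hv
    have h2 := hψ.comp_hasFDerivAt r ha
    have := h1.add h2
    unfold cellEnergy
    exact this
  -- key per-vertex identity
  have hkey : ∀ a : ι, r a ⬝ᵥ vgrad (cellEnergy F kV kA V₀ A₀) r a
      = DE (Pi.single a (r a)) := by
    intro a
    have hu := hasFDerivAt_update (𝕜 := ℝ) (i := a) r (r a)
    have hE' : HasFDerivAt (cellEnergy F kV kA V₀ A₀) DE (Function.update r a (r a)) := by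
      rw [Function.update_eq_self]; exact hE
    have hc := hE'.comp (r a) hu
    have hg : vgrad (cellEnergy F kV kA V₀ A₀) r a
        = fun i => (DE.comp (ContinuousLinearMap.pi
            (Pi.single a (ContinuousLinearMap.id ℝ (Fin 3 → ℝ))))) (Pi.single i 1) := by
      rw [Function.comp_def] at hc
      unfold vgrad grad3
      rw [hc.fderiv]
    rw [hg, aux_clm_dot, ContinuousLinearMap.comp_apply, aux_pi_single_clm]
  -- sum over vertices
  have hsum : ∑ a : ι, r a ⬝ᵥ vgrad (cellEnergy F kV kA V₀ A₀) r a = DE r := by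
    simp_rw [hkey]
    rw [← map_sum, Finset.univ_sum_single]
  -- value of DE r
  have hDEr : DE r = kV * (2 * (polyVol F r - V₀)) * (3 * polyVol F r)
      + kA * (2 * (polyArea F r - A₀)) * (2 * polyArea F r) := by
    rw [hDEdef]
    simp [ContinuousLinearMap.add_apply, ContinuousLinearMap.smul_apply, hLvr, hLar,
      smul_eq_mul]
  -- trace of the stress tensor
  have htr : Matrix.trace (cellStress F kV kA V₀ A₀ r)
      = (polyVol F r)⁻¹ *
        ∑ a : ι, r a ⬝ᵥ (-(vgrad (cellEnergy F kV kA V₀ A₀) r a)) := by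
    unfold cellStress
    rw [Matrix.trace_smul, Matrix.trace_sum]
    simp [Matrix.trace, Matrix.diag, vecMulVec_apply, dotProduct, smul_eq_mul,
      Finset.mul_sum]
  rw [htr]
  simp only [dotProduct_neg]
  rw [Finset.sum_neg_distrib, hsum, hDEr]
  field_simp
  ring
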